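/- arXiv:2501.04645 — 3 statements merged into one kernel-verified Lean document; each statement's English description precedes it below -/
import Mathlib

section
/- Let n ≥ 1, k ≥ 1, let A_1, …, A_k, B_1, …, B_k ∈ ℝ and α ∈ ℂ, and let r_1, …, r_k ∈ ℂ with r_i ≠ 1 for all i, such that the coefficients a_j of P(X) = ∏_{i=1}^k (X − r_i) = X^k + a_1 X^{k−1} + ⋯ + a_k satisfy a_j = A_j + B_j·α for j = 1, …, k. Let O(z) = z^n·∏_{i=1}^k (z − r_i)/(1 − r_i z), and set A = n + k + ∑_{j=1}^k (n+k−2j)A_j, B = ∑_{j=1}^k (n+k−2j)B_j, A' = 1 + ∑_{j=1}^k A_j, B' = ∑_{j=1}^k B_j, c = (AB − A'B')/(B² − B'²), ρ = (A'B − AB')/(B² − B'²). If B² − B'² > 0, then: |O'(1)| < 1 if and only if |α + c| < |ρ|; |O'(1)| = 1 if and only if |α + c| = |ρ|; and |O'(1)| > 1 if and only if |α + c| > |ρ|. That is, the fixed point z = 1 is attracting exactly inside the circle C: |α + c| = |ρ|, indifferent on C, and repelling outside C. -/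
/-!
Every Möbius factor `(z - rᵢ)/(1 - rᵢ z)` equals `1` at `z = 1` and has derivative
`(1 + rᵢ)/(1 - rᵢ)` there, so `O'(1) = n + ∑ (1 + rᵢ)/(1 - rᵢ) = n - k + 2 P'(1)/P(1)`.
Reading `P(1)` and `P'(1)` off the coefficients gives `O'(1) = (A + Bα)/(A' + B'α)`, and
`|A + Bα|² - |A' + B'α|² = (B² - B'²)(|α + c|² - ρ²)`: the circle `|α + c| = |ρ|` is the
Apollonius circle on which `|O'(1)| = 1`, and `B² - B'² > 0` fixes the side of each inequality.
-/

open Polynomial Finset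

theorem Finset.sum_Icc_one_sub_eq_sum_range {M : Type*} [AddCommMonoid M] (g : ℕ → M) (k : ℕ) :
    ∑ j ∈ Icc 1 k, g (k - j) = ∑ i ∈ range k, g i := by
  rw [← Ico_add_one_right_eq_Icc, sum_Ico_reflect g 1 le_rfl, Nat.sub_self, Nat.add_sub_cancel,
    range_eq_Ico]

namespace Polynomial

variable {R : Type*} [CommRing R] {P : R[X]} {k : ℕ}

theorem eval_one_eq_sum_coeff (hP : P.natDegree < k) : P.eval 1 = ∑ i ∈ range k, P.coeff i := by
  simp [eval_eq_sum_range' hP]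

theorem eval_one_derivative_eq_sum_coeff (hP : P.natDegree < k) :
    P.derivative.eval 1 = ∑ i ∈ range k, (i : R) * P.coeff i := by
  rw [derivative_eval, sum_over_range' _ (by simp) k hP]
  simp [mul_comm]

theorem Monic.eval_one_eq (hP : P.Monic) (hk : P.natDegree = k) :
    P.eval 1 = 1 + ∑ j ∈ Icc 1 k, P.coeff (k - j) := by
  rw [eval_one_eq_sum_coeff (k := k + 1) (by omega), sum_range_succ,
    sum_Icc_one_sub_eq_sum_range P.coeff, ← hk, hP.coeff_natDegree, add_comm]

theorem Monic.eval_one_derivative_eq (hP : P.Monic) (hk : P.natDegree = k) :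
    P.derivative.eval 1 = k + ∑ j ∈ Icc 1 k, ((k : R) - j) * P.coeff (k - j) := by
  rw [eval_one_derivative_eq_sum_coeff (k := k + 1) (by omega), sum_range_succ,
    ← sum_Icc_one_sub_eq_sum_range (fun i => (i : R) * P.coeff i), ← hk, hP.coeff_natDegree,
    mul_one, add_comm]
  refine congrArg _ (sum_congr rfl fun j hj => ?_)
  rw [Nat.cast_sub (mem_Icc.1 hj).2]

theorem Monic.sub_mul_eval_one_add_two_mul_eval_derivative (hP : P.Monic) (hk : P.natDegree = k)
    (n : ℕ) : (n - k) * P.eval 1 + 2 * P.derivative.eval 1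
      = n + k + ∑ j ∈ Icc 1 k, ((n : R) + k - 2 * j) * P.coeff (k - j) := by
  have hsum : ∑ j ∈ Icc 1 k, ((n : R) + k - 2 * j) * P.coeff (k - j)
      = (n - k) * ∑ j ∈ Icc 1 k, P.coeff (k - j)
        + 2 * ∑ j ∈ Icc 1 k, ((k : R) - j) * P.coeff (k - j) := by
    rw [mul_sum, mul_sum, ← sum_add_distrib]
    exact sum_congr rfl fun j _ => by ring
  rw [hP.eval_one_eq hk, hP.eval_one_derivative_eq hk, hsum]
  ring

end Polynomial

section Calculus

variable {𝕜 : Type*} [NontriviallyNormedField 𝕜]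

theorem HasDerivAt.finsetProd_of_apply_eq_one {ι : Type*} {s : Finset ι} {f : ι → 𝕜 → 𝕜}
    {f' : ι → 𝕜} {x : 𝕜} (hf : ∀ i ∈ s, HasDerivAt (f i) (f' i) x) (h1 : ∀ i ∈ s, f i x = 1) :
    HasDerivAt (∏ i ∈ s, f i ·) (∑ i ∈ s, f' i) x := by
  classical
  refine (HasDerivAt.fun_finsetProd hf).congr_deriv (sum_congr rfl fun i _ => ?_)
  rw [prod_eq_one fun j hj => h1 j (mem_of_mem_erase hj), one_smul]

theorem hasDerivAt_sub_div_one_sub_mul (r z : 𝕜) (hz : 1 - r * z ≠ 0) :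
    HasDerivAt (fun w => (w - r) / (1 - r * w)) ((1 - r ^ 2) / (1 - r * z) ^ 2) z := by
  have hden : HasDerivAt (fun w => 1 - r * w) (-r) z := by
    simpa using ((hasDerivAt_id z).const_mul r).const_sub 1
  refine (((hasDerivAt_id z).sub_const r).div hden hz).congr_deriv ?_
  simp only [id]
  ring

theorem eval_prod_X_sub_C_ne_zero {ι : Type*} [Fintype ι] (r : ι → 𝕜) {x : 𝕜}
    (hx : ∀ i, x ≠ r i) : (∏ i, (X - C (r i))).eval x ≠ 0 := by
  simpa [eval_prod, prod_eq_zero_iff, sub_eq_zero] using hx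

theorem eval_derivative_div_eval_prod_X_sub_C {ι : Type*} [Fintype ι] (r : ι → 𝕜) {x : 𝕜}
    (hx : ∀ i, x ≠ r i) :
    (∏ i, (X - C (r i))).derivative.eval x / (∏ i, (X - C (r i))).eval x = ∑ i, (x - r i)⁻¹ := by
  have heval : (fun z => (∏ i, (X - C (r i))).eval z) = fun z => ∏ i, (z - r i) := by
    funext z; simp [eval_prod]
  rw [← Polynomial.deriv, ← logDeriv_apply, heval, logDeriv_prod (fun i _ => sub_ne_zero.2 (hx i))
    (fun i _ => by fun_prop)]
  simp [logDeriv_apply]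

noncomputable def newtonLike {ι : Type*} [Fintype ι] (n : ℕ) (r : ι → 𝕜) (z : 𝕜) : 𝕜 :=
  z ^ n * ∏ i, (z - r i) / (1 - r i * z)

theorem hasDerivAt_newtonLike_one {ι : Type*} [Fintype ι] (n : ℕ) {r : ι → 𝕜} (hr : ∀ i, r i ≠ 1) :
    HasDerivAt (newtonLike n r) (n + ∑ i, (1 + r i) / (1 - r i)) 1 := by
  have h1 : ∀ i, 1 - r i ≠ 0 := fun i => sub_ne_zero.2 (hr i).symm
  have hprod := HasDerivAt.finsetProd_of_apply_eq_one (s := univ)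
    (fun i _ => hasDerivAt_sub_div_one_sub_mul (r i) 1 (by rw [mul_one]; exact h1 i))
    (fun i _ => by rw [mul_one, div_self (h1 i)])
  refine ((hasDerivAt_pow n (1 : 𝕜)).mul hprod).congr_deriv ?_
  simp only [one_pow, mul_one, one_mul, prod_eq_one fun i _ => div_self (h1 i)]
  refine congrArg _ (sum_congr rfl fun i _ => ?_)
  have := h1 i
  field_simp
  ring

theorem deriv_newtonLike_one {ι : Type*} [Fintype ι] (n : ℕ) {r : ι → 𝕜} (hr : ∀ i, r i ≠ 1) :
    deriv (newtonLike n r) 1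
      = ((n - Fintype.card ι) * (∏ i, (X - C (r i))).eval 1
          + 2 * (∏ i, (X - C (r i))).derivative.eval 1) / (∏ i, (X - C (r i))).eval 1 := by
  have h1 : ∀ i, 1 - r i ≠ 0 := fun i => sub_ne_zero.2 (hr i).symm
  have hP1 := eval_prod_X_sub_C_ne_zero r fun i => (hr i).symm
  rw [(hasDerivAt_newtonLike_one n hr).deriv, add_div, mul_div_cancel_right₀ _ hP1, mul_div_assoc,
    eval_derivative_div_eval_prod_X_sub_C r fun i => (hr i).symm]
  have hterm : ∀ i, (1 + r i) / (1 - r i) = 2 * (1 - r i)⁻¹ - 1 := fun i => by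
    have := h1 i
    field_simp
    ring
  simp only [hterm, sum_sub_distrib, ← mul_sum, sum_const, card_univ, nsmul_eq_mul, mul_one]
  ring

end Calculus

theorem lt_iff_lt_of_sq_sub_sq_eq_mul {x y u v t : ℝ} (hx : 0 ≤ x) (hy : 0 ≤ y) (hu : 0 ≤ u)
    (hv : 0 ≤ v) (ht : 0 < t) (h : x ^ 2 - y ^ 2 = t * (u ^ 2 - v ^ 2)) : x < y ↔ u < v := by
  rw [← pow_lt_pow_iff_left₀ hx hy two_ne_zero, ← pow_lt_pow_iff_left₀ hu hv two_ne_zero, ← sub_neg,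
    h, ← sub_neg (a := u ^ 2)]
  exact ⟨fun hneg => neg_of_mul_neg_right hneg ht.le, mul_neg_of_pos_of_neg ht⟩

theorem trichotomy_of_sq_sub_sq_eq_mul {x y u v t : ℝ} (hx : 0 ≤ x) (hy : 0 ≤ y) (hu : 0 ≤ u)
    (hv : 0 ≤ v) (ht : 0 < t) (h : x ^ 2 - y ^ 2 = t * (u ^ 2 - v ^ 2)) :
    (x < y ↔ u < v) ∧ (x = y ↔ u = v) ∧ (x > y ↔ u > v) := by
  have hlt := lt_iff_lt_of_sq_sub_sq_eq_mul hx hy hu hv ht h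
  have hgt := lt_iff_lt_of_sq_sub_sq_eq_mul hy hx hv hu ht (by linear_combination -h)
  refine ⟨hlt, ?_, hgt⟩
  simp only [le_antisymm_iff, ← not_lt, hlt, hgt]

theorem trichotomy_norm_div_one_of_sq_norm_sub_sq_norm_eq_mul {𝕜 : Type*} [NormedField 𝕜]
    {N D : 𝕜} {u v t : ℝ} (hD : D ≠ 0) (hu : 0 ≤ u) (hv : 0 ≤ v) (ht : 0 < t)
    (h : ‖N‖ ^ 2 - ‖D‖ ^ 2 = t * (u ^ 2 - v ^ 2)) :
    (‖N / D‖ < 1 ↔ u < v) ∧ (‖N / D‖ = 1 ↔ u = v) ∧ (‖N / D‖ > 1 ↔ u > v) := by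
  have hD' : ‖D‖ ≠ 0 := norm_ne_zero_iff.2 hD
  refine trichotomy_of_sq_sub_sq_eq_mul (norm_nonneg _) zero_le_one hu hv
    (t := t / ‖D‖ ^ 2) (by positivity) ?_
  rw [norm_div, div_pow]
  field_simp
  linear_combination h

theorem Complex.sq_norm_add_mul_sub_sq_norm_add_mul (a b a' b' : ℝ) (α : ℂ)
    (h : b ^ 2 - b' ^ 2 ≠ 0) :
    ‖a + b * α‖ ^ 2 - ‖a' + b' * α‖ ^ 2
      = (b ^ 2 - b' ^ 2) * (‖α + ((a * b - a' * b') / (b ^ 2 - b' ^ 2) : ℝ)‖ ^ 2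
          - ((a' * b - a * b') / (b ^ 2 - b' ^ 2)) ^ 2) := by
  simp only [Complex.sq_norm, normSq_apply, add_re, add_im, mul_re, mul_im, ofReal_re, ofReal_im]
  field_simp
  ring

theorem stmt15_general (n k : ℕ)
    (A B : ℕ → ℝ) (α : ℂ)
    (r : Fin k → ℂ) (hr : ∀ i, r i ≠ 1)
    (P : Polynomial ℂ) (hP : P = ∏ i, (X - C (r i)))
    (hcoef : ∀ j ∈ Finset.Icc 1 k, P.coeff (k - j) = (A j : ℂ) + (B j : ℂ) * α)
    (O : ℂ → ℂ) (hO : ∀ z : ℂ, O z = z ^ n * ∏ i, (z - r i) / (1 - r i * z))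
    (Abig Bbig A' B' c ρ : ℝ)
    (hAbig : Abig = (n : ℝ) + (k : ℝ) + ∑ j ∈ Finset.Icc 1 k, ((n : ℝ) + (k : ℝ) - 2 * (j : ℝ)) * A j)
    (hBbig : Bbig = ∑ j ∈ Finset.Icc 1 k, ((n : ℝ) + (k : ℝ) - 2 * (j : ℝ)) * B j)
    (hA' : A' = 1 + ∑ j ∈ Finset.Icc 1 k, A j)
    (hB' : B' = ∑ j ∈ Finset.Icc 1 k, B j)
    (hc : c = (Abig * Bbig - A' * B') / (Bbig ^ 2 - B' ^ 2))
    (hρ : ρ = (A' * Bbig - Abig * B') / (Bbig ^ 2 - B' ^ 2))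
    (hBpos : Bbig ^ 2 - B' ^ 2 > 0) :
    (‖deriv O 1‖ < 1 ↔ ‖α + (c : ℂ)‖ < |ρ|) ∧
    (‖deriv O 1‖ = 1 ↔ ‖α + (c : ℂ)‖ = |ρ|) ∧
    (‖deriv O 1‖ > 1 ↔ ‖α + (c : ℂ)‖ > |ρ|) := by
  have hmonic : P.Monic := hP ▸ monic_prod_of_monic _ _ fun i _ => monic_X_sub_C _
  have hdeg : P.natDegree = k := by simp [hP]
  have hden : P.eval 1 = A' + B' * α := by
    rw [hmonic.eval_one_eq hdeg, sum_congr rfl hcoef, hA', hB']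
    push_cast
    rw [sum_add_distrib, ← sum_mul]
    ring
  have hnum : (n - k) * P.eval 1 + 2 * P.derivative.eval 1 = Abig + Bbig * α := by
    rw [hmonic.sub_mul_eval_one_add_two_mul_eval_derivative hdeg,
      sum_congr rfl fun j hj => by rw [hcoef j hj], hAbig, hBbig]
    push_cast
    simp only [mul_add, sum_add_distrib, ← mul_assoc, ← sum_mul]
    ring
  have hderiv : deriv O 1 = (Abig + Bbig * α) / (A' + B' * α) := by
    rw [show O = newtonLike n r from funext hO, deriv_newtonLike_one n hr, ← hP, Fintype.card_fin,
      hnum, hden]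
  have hD : (A' : ℂ) + B' * α ≠ 0 := hden ▸ hP ▸ eval_prod_X_sub_C_ne_zero r fun i => (hr i).symm
  rw [hderiv, hc, hρ]
  refine trichotomy_norm_div_one_of_sq_norm_sub_sq_norm_eq_mul hD (norm_nonneg _) (abs_nonneg _)
    hBpos ?_
  rw [sq_abs]
  exact Complex.sq_norm_add_mul_sub_sq_norm_add_mul _ _ _ _ _ hBpos.ne'

/-- Stability of the fixed point `z = 1` of the Newton-like operator
`O(z) = z^n·∏ (z − rᵢ)/(1 − rᵢz)` when the coefficients `a_j = coeff (k−j)` of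
`P(X) = ∏ (X − rᵢ)` depend linearly on a complex parameter `α`: `a_j = A_j + B_j·α`
with `A_j, B_j ∈ ℝ`. With `A = n+k+∑(n+k−2j)A_j`, `B = ∑(n+k−2j)B_j`,
`A' = 1+∑A_j`, `B' = ∑B_j`, `c = (AB−A'B')/(B²−B'²)`, `ρ = (A'B−AB')/(B²−B'²)`,
if `B²−B'² > 0` then `z = 1` is attracting iff `|α+c| < |ρ|`, indifferent iff
`|α+c| = |ρ|`, repelling iff `|α+c| > |ρ|`. -/
theorem stmt15 (n k : ℕ) (hn : 1 ≤ n) (hk : 1 ≤ k)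
    (A B : ℕ → ℝ) (α : ℂ)
    (r : Fin k → ℂ) (hr : ∀ i, r i ≠ 1)
    (P : Polynomial ℂ) (hP : P = ∏ i, (X - C (r i)))
    (hcoef : ∀ j ∈ Finset.Icc 1 k, P.coeff (k - j) = (A j : ℂ) + (B j : ℂ) * α)
    (O : ℂ → ℂ) (hO : ∀ z : ℂ, O z = z ^ n * ∏ i, (z - r i) / (1 - r i * z))
    (Abig Bbig A' B' c ρ : ℝ)
    (hAbig : Abig = (n : ℝ) + (k : ℝ) + ∑ j ∈ Finset.Icc 1 k, ((n : ℝ) + (k : ℝ) - 2 * (j : ℝ)) * A j)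
    (hBbig : Bbig = ∑ j ∈ Finset.Icc 1 k, ((n : ℝ) + (k : ℝ) - 2 * (j : ℝ)) * B j)
    (hA' : A' = 1 + ∑ j ∈ Finset.Icc 1 k, A j)
    (hB' : B' = ∑ j ∈ Finset.Icc 1 k, B j)
    (hc : c = (Abig * Bbig - A' * B') / (Bbig ^ 2 - B' ^ 2))
    (hρ : ρ = (A' * Bbig - Abig * B') / (Bbig ^ 2 - B' ^ 2))
    (hBpos : Bbig ^ 2 - B' ^ 2 > 0) :
    (‖deriv O 1‖ < 1 ↔ ‖α + (c : ℂ)‖ < |ρ|) ∧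
    (‖deriv O 1‖ = 1 ↔ ‖α + (c : ℂ)‖ = |ρ|) ∧
    (‖deriv O 1‖ > 1 ↔ ‖α + (c : ℂ)‖ > |ρ|) :=
  stmt15_general n k A B α r hr P hP hcoef O hO Abig Bbig A' B' c ρ hAbig hBbig hA' hB' hc hρ hBpos
end

section
/- Let n ≥ 1, k ≥ 1, let A_1, …, A_k, B_1, …, B_k ∈ ℝ and α ∈ ℂ, and let r_1, …, r_k ∈ ℂ with r_i ≠ 1 for all i, such that the coefficients a_j of P(X) = ∏_{i=1}^k (X − r_i) = X^k + a_1 X^{k−1} + ⋯ + a_k satisfy a_j = A_j + B_j·α for j = 1, …, k. Let O(z) = z^n·∏_{i=1}^k (z − r_i)/(1 − r_i z), and set A = n + k + ∑_{j=1}^k (n+k−2j)A_j, B = ∑_{j=1}^k (n+k−2j)B_j, A' = 1 + ∑_{j=1}^k A_j, B' = ∑_{j=1}^k B_j. If B = 0 and B' = 0, then: |O'(1)| < 1 if and only if |A| < |A'|; |O'(1)| = 1 if and only if |A| = |A'|; and |O'(1)| > 1 if and only if |A| > |A'|. That is, the fixed point z = 1 is attracting iff |A| < |A'|, indifferent iff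 |A| = |A'|, and repelling iff |A| > |A'|. -/
/-!
Since `O 1 = 1`, `O'(1)` is the logarithmic derivative of `O` at `1`, namely
`n + ∑ (1 + rᵢ)/(1 - rᵢ) = n - k + 2 P'(1)/P(1)`. Hence
`O'(1) P(1) = (n - k) P(1) + 2 P'(1) = ∑ₘ (n - k + 2m) a_{k-m} = A + Bα`,
while `P(1) = A' + B'α`.
When `B = B' = 0` both are real, so `O'(1) = A / A'`.
-/

open Polynomial Finset

theorem Finset.sum_range_succ_eq_add_sum_Icc_sub {M : Type*} [AddCommMonoid M] (f : ℕ → M)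
    (k : ℕ) :
    ∑ m ∈ range (k + 1), f m = f k + ∑ j ∈ Icc 1 k, f (k - j) := by
  rw [← sum_range_reflect, sum_range_succ', ← Ico_add_one_right_eq_Icc, sum_Ico_eq_sum_range]
  simp only [add_tsub_cancel_right, tsub_zero, add_comm 1]
  exact add_comm _ _

theorem HasDerivAt.fun_finsetProd_of_eq_one {𝕜 ι : Type*} [NontriviallyNormedField 𝕜]
    {s : Finset ι} {f : ι → 𝕜 → 𝕜} {f' : ι → 𝕜} {x : 𝕜}
    (hf : ∀ i ∈ s, HasDerivAt (f i) (f' i) x) (h1 : ∀ i ∈ s, f i x = 1) :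
    HasDerivAt (fun z => ∏ i ∈ s, f i z) (∑ i ∈ s, f' i) x := by
  classical
  refine (HasDerivAt.fun_finsetProd hf).congr_deriv (sum_congr rfl fun i _ => ?_)
  rw [prod_eq_one fun j hj => h1 j (mem_of_mem_erase hj), one_smul]

theorem hasDerivAt_div_one_sub_mul_at_one {𝕜 : Type*} [NontriviallyNormedField 𝕜] {r : 𝕜}
    (hr : r ≠ 1) : HasDerivAt (fun z => (z - r) / (1 - r * z)) ((1 + r) / (1 - r)) 1 := by
  have h : (1 : 𝕜) - r ≠ 0 := sub_ne_zero.2 hr.symm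
  refine (((hasDerivAt_id (1 : 𝕜)).sub_const r).fun_div
    (((hasDerivAt_id (1 : 𝕜)).const_mul r).const_sub 1) (by simpa using h)).congr_deriv ?_
  simp only [id, mul_one]
  field_simp
  ring

theorem hasDerivAt_pow_mul_prod_at_one {𝕜 ι : Type*} [NontriviallyNormedField 𝕜] (n : ℕ)
    {s : Finset ι} {r : ι → 𝕜} (hr : ∀ i ∈ s, r i ≠ 1) :
    HasDerivAt (fun z => z ^ n * ∏ i ∈ s, (z - r i) / (1 - r i * z))
      (n + ∑ i ∈ s, (1 + r i) / (1 - r i)) 1 := by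
  have h1 : ∀ i ∈ s, (1 - r i) / (1 - r i * 1) = 1 := fun i hi => by
    rw [mul_one, div_self (sub_ne_zero.2 (hr i hi).symm)]
  refine ((hasDerivAt_pow n (1 : 𝕜)).fun_mul (HasDerivAt.fun_finsetProd_of_eq_one
    (fun i hi => hasDerivAt_div_one_sub_mul_at_one (hr i hi)) h1)).congr_deriv ?_
  rw [prod_congr rfl h1, prod_const_one, one_pow, one_pow, mul_one, mul_one, one_mul]

namespace Polynomial

variable {R : Type*} [CommRing R] {p : R[X]} {k : ℕ}

theorem eval_one_eq_sum_range_coeff (hp : p.natDegree ≤ k) :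
    p.eval 1 = ∑ m ∈ range (k + 1), p.coeff m := by
  simp [eval_eq_sum_range' (Nat.lt_succ_of_le hp)]

theorem eval_one_derivative_eq_sum_range (hp : p.natDegree ≤ k) :
    p.derivative.eval 1 = ∑ m ∈ range (k + 1), m * p.coeff m := by
  rw [derivative_eval, sum_over_range' _ (by simp) _ (Nat.lt_succ_of_le hp)]
  simp [mul_comm]

theorem Monic.eval_one_eq_one_add_sum_coeff (hp : p.Monic) (hk : p.natDegree = k) :
    p.eval 1 = 1 + ∑ j ∈ Icc 1 k, p.coeff (k - j) := by
  rw [eval_one_eq_sum_range_coeff hk.le, sum_range_succ_eq_add_sum_Icc_sub, ← hk,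
    hp.coeff_natDegree]

theorem Monic.sub_mul_eval_one_add_two_mul_eval_one_derivative (hp : p.Monic)
    (hk : p.natDegree = k) (c : R) : (c - k) * p.eval 1 + 2 * p.derivative.eval 1 =
      c + k + ∑ j ∈ Icc 1 k, (c + k - 2 * j) * p.coeff (k - j) := by
  rw [eval_one_eq_sum_range_coeff hk.le, eval_one_derivative_eq_sum_range hk.le, mul_sum, mul_sum,
    ← sum_add_distrib, sum_range_succ_eq_add_sum_Icc_sub, ← hk, hp.coeff_natDegree, hk]
  congr 1
  · ring
  · refine sum_congr rfl fun j hj => ?_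
    rw [Nat.cast_sub (mem_Icc.1 hj).2]
    ring

variable {K ι : Type*} [Field K]

theorem eval_derivative_prod_X_sub_C (s : Finset ι) (r : ι → K) {x : K}
    (hx : ∀ i ∈ s, x ≠ r i) :
    (∏ i ∈ s, (X - C (r i))).derivative.eval x =
      (∏ i ∈ s, (X - C (r i))).eval x * ∑ i ∈ s, 1 / (x - r i) := by
  classical
  simp only [derivative_prod_finset, derivative_X_sub_C, mul_one, eval_finsetSum, eval_prod,
    eval_sub, eval_X, eval_C, mul_sum]
  refine sum_congr rfl fun i hi => ?_
  rw [← mul_prod_erase s _ hi, mul_comm, one_div,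
    inv_mul_cancel_left₀ (sub_ne_zero.2 (hx i hi))]

theorem natCast_add_sum_div_mul_eval_one_prod_X_sub_C (n : ℕ) {k : ℕ} (r : Fin k → K)
    (hr : ∀ i, r i ≠ 1) :
    ((n : K) + ∑ i, (1 + r i) / (1 - r i)) * (∏ i, (X - C (r i))).eval 1 =
      n + k + ∑ j ∈ Icc 1 k, ((n : K) + k - 2 * j) * (∏ i, (X - C (r i))).coeff (k - j) := by
  have hsum : ∑ i, (1 + r i) / (1 - r i) = 2 * ∑ i, 1 / (1 - r i) - k := by
    have h (i) : (1 + r i) / (1 - r i) = 2 * (1 / (1 - r i)) - 1 := by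
      field_simp [sub_ne_zero.2 (hr i).symm]
      ring
    simp [h, sum_sub_distrib, mul_sum]
  calc _ = ((n : K) - k) * (∏ i, (X - C (r i))).eval 1
          + 2 * (∏ i, (X - C (r i))).derivative.eval 1 := by
        rw [hsum, eval_derivative_prod_X_sub_C _ _ fun i _ => (hr i).symm]
        ring
    _ = _ := (monic_prod_X_sub_C r univ).sub_mul_eval_one_add_two_mul_eval_one_derivative
        (by simp) n

end Polynomial

theorem Complex.sum_mul_eq_ofReal_add_ofReal_mul {ι : Type*} {s : Finset ι} {c : ι → ℂ}
    {A B : ι → ℝ} {α : ℂ} (w : ι → ℝ) (hc : ∀ j ∈ s, c j = A j + B j * α) :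
    ∑ j ∈ s, (w j : ℂ) * c j =
      ((∑ j ∈ s, w j * A j : ℝ) : ℂ) + ((∑ j ∈ s, w j * B j : ℝ) : ℂ) * α := by
  rw [sum_congr rfl fun j hj => by rw [hc j hj]]
  push_cast
  simp only [mul_add, sum_add_distrib, sum_mul, mul_assoc]

theorem stmt16_general (n k : ℕ)
    (A B : ℕ → ℝ) (α : ℂ)
    (r : Fin k → ℂ) (hr : ∀ i, r i ≠ 1)
    (P : Polynomial ℂ) (hP : P = ∏ i, (X - C (r i)))
    (hcoef : ∀ j ∈ Finset.Icc 1 k, P.coeff (k - j) = (A j : ℂ) + (B j : ℂ) * α)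
    (O : ℂ → ℂ) (hO : ∀ z : ℂ, O z = z ^ n * ∏ i, (z - r i) / (1 - r i * z))
    (Abig Bbig A' B' : ℝ)
    (hAbig : Abig = (n : ℝ) + (k : ℝ) + ∑ j ∈ Finset.Icc 1 k, ((n : ℝ) + (k : ℝ) - 2 * (j : ℝ)) * A j)
    (hBbig : Bbig = ∑ j ∈ Finset.Icc 1 k, ((n : ℝ) + (k : ℝ) - 2 * (j : ℝ)) * B j)
    (hA' : A' = 1 + ∑ j ∈ Finset.Icc 1 k, A j)
    (hB' : B' = ∑ j ∈ Finset.Icc 1 k, B j)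
    (hB0 : Bbig = 0) (hB'0 : B' = 0) :
    (‖deriv O 1‖ < 1 ↔ |Abig| < |A'|) ∧
    (‖deriv O 1‖ = 1 ↔ |Abig| = |A'|) ∧
    (‖deriv O 1‖ > 1 ↔ |Abig| > |A'|) := by
  subst hP
  have hderiv : deriv O 1 = n + ∑ i, (1 + r i) / (1 - r i) := by
    rw [show O = _ from funext hO]
    exact (hasDerivAt_pow_mul_prod_at_one n fun i _ => hr i).deriv
  have heval : (∏ i, (X - C (r i))).eval 1 = (A' : ℂ) := by
    rw [(monic_prod_X_sub_C r univ).eval_one_eq_one_add_sum_coeff (k := k) (by simp)]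
    simpa [hA', ← hB', hB'0] using Complex.sum_mul_eq_ofReal_add_ofReal_mul (fun _ => 1) hcoef
  have hA'0 : A' ≠ 0 := by
    have : (∏ i, (X - C (r i))).eval 1 ≠ 0 := by
      simpa [eval_prod, prod_ne_zero_iff, sub_ne_zero] using fun i => (hr i).symm
    exact_mod_cast heval ▸ this
  have hmul : deriv O 1 * A' = Abig := by
    rw [hderiv, ← heval, natCast_add_sum_div_mul_eval_one_prod_X_sub_C n r hr]
    have hweighted :=
      Complex.sum_mul_eq_ofReal_add_ofReal_mul (fun j : ℕ => (n : ℝ) + k - 2 * j) hcoef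
    simp only [← hBbig, hB0, Complex.ofReal_zero, zero_mul, add_zero] at hweighted
    push_cast at hweighted
    rw [hweighted, hAbig]
    push_cast
    ring
  have hnorm : ‖deriv O 1‖ = |Abig| / |A'| := by
    rw [eq_div_of_mul_eq (by exact_mod_cast hA'0) hmul, norm_div, Complex.norm_real,
      Complex.norm_real, Real.norm_eq_abs, Real.norm_eq_abs]
  have hpos : 0 < |A'| := abs_pos.2 hA'0
  rw [hnorm]
  exact ⟨div_lt_one hpos, div_eq_one_iff_eq hpos.ne', one_lt_div hpos⟩

/-- Same setting as Statement 15 (linear dependence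
`a_j = A_j + B_j·α` of the coefficients of `P(X) = ∏ (X − rᵢ)` on the parameter `α`).
If `B = ∑(n+k−2j)B_j = 0` and `B' = ∑B_j = 0`, then the fixed point `z = 1` of
`O(z) = z^n·∏ (z − rᵢ)/(1 − rᵢz)` is attracting iff `|A| < |A'|`, indifferent iff
`|A| = |A'|`, and repelling iff `|A| > |A'|`, where `A = n+k+∑(n+k−2j)A_j` and
`A' = 1+∑A_j`. -/
theorem stmt16 (n k : ℕ) (hn : 1 ≤ n) (hk : 1 ≤ k)
    (A B : ℕ → ℝ) (α : ℂ)
    (r : Fin k → ℂ) (hr : ∀ i, r i ≠ 1)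
    (P : Polynomial ℂ) (hP : P = ∏ i, (X - C (r i)))
    (hcoef : ∀ j ∈ Finset.Icc 1 k, P.coeff (k - j) = (A j : ℂ) + (B j : ℂ) * α)
    (O : ℂ → ℂ) (hO : ∀ z : ℂ, O z = z ^ n * ∏ i, (z - r i) / (1 - r i * z))
    (Abig Bbig A' B' : ℝ)
    (hAbig : Abig = (n : ℝ) + (k : ℝ) + ∑ j ∈ Finset.Icc 1 k, ((n : ℝ) + (k : ℝ) - 2 * (j : ℝ)) * A j)
    (hBbig : Bbig = ∑ j ∈ Finset.Icc 1 k, ((n : ℝ) + (k : ℝ) - 2 * (j : ℝ)) * B j)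
    (hA' : A' = 1 + ∑ j ∈ Finset.Icc 1 k, A j)
    (hB' : B' = ∑ j ∈ Finset.Icc 1 k, B j)
    (hB0 : Bbig = 0) (hB'0 : B' = 0) :
    (‖deriv O 1‖ < 1 ↔ |Abig| < |A'|) ∧
    (‖deriv O 1‖ = 1 ↔ |Abig| = |A'|) ∧
    (‖deriv O 1‖ > 1 ↔ |Abig| > |A'|) :=
  stmt16_general n k A B α r hr P hP hcoef O hO Abig Bbig A' B' hAbig hBbig hA' hB' hB0 hB'0
end

section
/- Let n ≥ 1, k ≥ 1, let A_1, …, A_k, B_1, …, B_k ∈ ℝ and α ∈ ℂ, and let r_1, …, r_k ∈ ℂ with r_i ≠ 1 for all i, such that the coefficients a_j of P(X) = ∏_{i=1}^k (X − r_i) = X^k + a_1 X^{k−1} + ⋯ + a_k satisfy a_j = A_j + B_j·α for j = 1, …, k. Let O(z) = z^n·∏_{i=1}^k (z − r_i)/(1 − r_i z), and set A = n + k + ∑_{j=1}^k (n+k−2j)A_j and B = ∑_{j=1}^k (n+k−2j)B_j. If B ≠ 0 and α = −A/B, then O'(1) = 0, i.e. the fixed point z = 1 is superattracting. -/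
/-!
Write `P(z) = ∏ (z - rᵢ)` and `Q(z) = ∏ (1 - rᵢ z)`. Since `Q(z) = z^k P(1/z)`, we get
`Q(1) = P(1)` and `Q'(1) = k P(1) - P'(1)`, so the quotient rule applied to `O = z^n P / Q` gives
`O'(1) = ((n - k) P(1) + 2 P'(1)) / P(1)`. Expanded in the coefficients of `P`, the numerator is
`n + k + ∑ (n + k - 2j) a_j = A + B α`, which vanishes for `α = -A/B`.
-/

open Polynomial Finset

namespace Polynomial

variable {R : Type*} [CommRing R]

theorem eval_one_eq_sum_range {p : R[X]} {k : ℕ} (hp : p.natDegree < k) :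
    p.eval 1 = ∑ m ∈ range k, p.coeff m := by
  simp [eval_eq_sum_range' hp]

theorem derivative_eval_one_eq_sum_range {p : R[X]} {k : ℕ} (hp : p.natDegree < k) :
    p.derivative.eval 1 = ∑ m ∈ range k, (m : R) * p.coeff m := by
  rw [derivative_eval, sum_over_range' _ (by simp) k hp]
  simp [mul_comm]

theorem Monic.sub_mul_eval_add_two_mul_derivative_eval_one {p : R[X]} (hp : p.Monic) (c : R) :
    (c - p.natDegree) * p.eval 1 + 2 * p.derivative.eval 1 =
      c + p.natDegree +
        ∑ j ∈ Icc 1 p.natDegree, (c + p.natDegree - 2 * j) * p.coeff (p.natDegree - j) := by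
  set k := p.natDegree
  have hlt : k < k + 1 := k.lt_succ_self
  have hk : p.coeff k = 1 := hp.coeff_natDegree
  rw [eval_one_eq_sum_range hlt, derivative_eval_one_eq_sum_range hlt, mul_sum, mul_sum,
    ← sum_add_distrib, ← sum_range_reflect, sum_range_succ', ← Ico_add_one_right_eq_Icc,
    sum_Ico_eq_sum_range, add_tsub_cancel_right, add_comm]
  simp only [tsub_zero, hk]
  congr 1
  · ring
  · refine sum_congr rfl fun j hj => ?_
    rw [Nat.add_comm 1 j, Nat.cast_sub (by simp at hj; omega)]
    push_cast
    ring

end Polynomial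

section NewtonLike

variable {𝕜 ι : Type*} [Fintype ι]

theorem prod_one_sub_mul_eq_pow_mul_prod_inv_sub [Field 𝕜] (r : ι → 𝕜) {z : 𝕜} (hz : z ≠ 0) :
    ∏ i, (1 - r i * z) = z ^ Fintype.card ι * ∏ i, (z⁻¹ - r i) := by
  rw [← card_univ, ← prod_const, ← prod_mul_distrib]
  refine prod_congr rfl fun i _ => ?_
  field_simp

variable [NontriviallyNormedField 𝕜]

theorem hasDerivAt_prod_one_sub_mul_one (r : ι → 𝕜) (P : 𝕜[X]) (hP : P = ∏ i, (X - C (r i))) :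
    HasDerivAt (fun z => ∏ i, (1 - r i * z))
      (Fintype.card ι * P.eval 1 - P.derivative.eval 1) 1 := by
  have hPeval (z : 𝕜) : P.eval z = ∏ i, (z - r i) := by simp [hP, eval_prod]
  have hreversed := (hasDerivAt_pow (Fintype.card ι) (1 : 𝕜)).fun_mul
    ((P.hasDerivAt (1 : 𝕜)⁻¹).comp 1 (hasDerivAt_inv one_ne_zero))
  refine (hreversed.congr_of_eventuallyEq ?_).congr_deriv (by simp [sub_eq_add_neg])
  filter_upwards [eventually_ne_nhds one_ne_zero] with z hz
  simp [prod_one_sub_mul_eq_pow_mul_prod_inv_sub r hz, hPeval]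

theorem hasDerivAt_newtonLike_one_s17 (n : ℕ) (r : ι → 𝕜) (hr : ∀ i, r i ≠ 1) (P : 𝕜[X])
    (hP : P = ∏ i, (X - C (r i))) :
    HasDerivAt (fun z => z ^ n * ∏ i, (z - r i) / (1 - r i * z))
      (((n - Fintype.card ι) * P.eval 1 + 2 * P.derivative.eval 1) / P.eval 1) 1 := by
  have hPeval (z : 𝕜) : P.eval z = ∏ i, (z - r i) := by simp [hP, eval_prod]
  have hP1 : P.eval 1 ≠ 0 := by
    rw [hPeval]
    exact prod_ne_zero_iff.mpr fun i _ => sub_ne_zero.mpr (hr i).symm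
  have hquot : (fun z => z ^ n * ∏ i, (z - r i) / (1 - r i * z)) =
      fun z => z ^ n * P.eval z / ∏ i, (1 - r i * z) := by
    funext z
    rw [prod_div_distrib, mul_div_assoc, hPeval]
  have hden : ∏ i, (1 - r i * 1) = P.eval 1 := by simp [hPeval]
  rw [hquot]
  refine (((hasDerivAt_pow n 1).fun_mul (P.hasDerivAt 1)).fun_div
    (hasDerivAt_prod_one_sub_mul_one r P hP) (hden ▸ hP1)).congr_deriv ?_
  rw [hden]
  field_simp
  ring

end NewtonLike

theorem stmt17_general (n k : ℕ)
    (A B : ℕ → ℝ) (α : ℂ)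
    (r : Fin k → ℂ) (hr : ∀ i, r i ≠ 1)
    (P : Polynomial ℂ) (hP : P = ∏ i, (X - C (r i)))
    (hcoef : ∀ j ∈ Finset.Icc 1 k, P.coeff (k - j) = (A j : ℂ) + (B j : ℂ) * α)
    (O : ℂ → ℂ) (hO : ∀ z : ℂ, O z = z ^ n * ∏ i, (z - r i) / (1 - r i * z))
    (Abig Bbig : ℝ)
    (hAbig : Abig = (n : ℝ) + (k : ℝ) + ∑ j ∈ Finset.Icc 1 k, ((n : ℝ) + (k : ℝ) - 2 * (j : ℝ)) * A j)
    (hBbig : Bbig = ∑ j ∈ Finset.Icc 1 k, ((n : ℝ) + (k : ℝ) - 2 * (j : ℝ)) * B j)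
    (hBne : Bbig ≠ 0) (hα : α = ((-(Abig / Bbig) : ℝ) : ℂ)) :
    deriv O 1 = 0 := by
  have hdeg : P.natDegree = k := by
    simp [hP, natDegree_prod _ _ fun i _ => X_sub_C_ne_zero (r i)]
  have hmonic : P.Monic := hP ▸ monic_prod_of_monic _ _ fun i _ => monic_X_sub_C (r i)
  have hAB : (Abig : ℂ) + Bbig * α = 0 := by
    rw [hα, ← Complex.ofReal_mul, ← Complex.ofReal_add, mul_neg, mul_div_cancel₀ _ hBne,
      add_neg_cancel, Complex.ofReal_zero]
  have hsum : ∑ j ∈ Icc 1 k, ((n : ℂ) + k - 2 * j) * P.coeff (k - j) =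
      ∑ j ∈ Icc 1 k, ((n : ℂ) + k - 2 * j) * A j +
        (∑ j ∈ Icc 1 k, ((n : ℂ) + k - 2 * j) * B j) * α := by
    rw [sum_mul, ← sum_add_distrib]
    exact sum_congr rfl fun j hj => by rw [hcoef j hj]; ring
  rw [show O = _ from funext hO, (hasDerivAt_newtonLike_one_s17 n r hr P hP).deriv, Fintype.card_fin,
    ← hdeg, hmonic.sub_mul_eval_add_two_mul_derivative_eval_one, hdeg, div_eq_zero_iff]
  left
  rw [hAbig, hBbig] at hAB
  push_cast at hAB
  linear_combination hAB + hsum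

/-- Same setting as Statement 15 (linear dependence
`a_j = A_j + B_j·α` of the coefficients of `P(X) = ∏ (X − rᵢ)` on the parameter `α`).
With `A = n+k+∑(n+k−2j)A_j` and `B = ∑(n+k−2j)B_j`, if `B ≠ 0` and `α = −A/B`, then
`O'(1) = 0`, i.e. the fixed point `z = 1` of `O(z) = z^n·∏ (z − rᵢ)/(1 − rᵢz)` is
superattracting. -/
theorem stmt17 (n k : ℕ) (hn : 1 ≤ n) (hk : 1 ≤ k)
    (A B : ℕ → ℝ) (α : ℂ)
    (r : Fin k → ℂ) (hr : ∀ i, r i ≠ 1)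
    (P : Polynomial ℂ) (hP : P = ∏ i, (X - C (r i)))
    (hcoef : ∀ j ∈ Finset.Icc 1 k, P.coeff (k - j) = (A j : ℂ) + (B j : ℂ) * α)
    (O : ℂ → ℂ) (hO : ∀ z : ℂ, O z = z ^ n * ∏ i, (z - r i) / (1 - r i * z))
    (Abig Bbig : ℝ)
    (hAbig : Abig = (n : ℝ) + (k : ℝ) + ∑ j ∈ Finset.Icc 1 k, ((n : ℝ) + (k : ℝ) - 2 * (j : ℝ)) * A j)
    (hBbig : Bbig = ∑ j ∈ Finset.Icc 1 k, ((n : ℝ) + (k : ℝ) - 2 * (j : ℝ)) * B j)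
    (hBne : Bbig ≠ 0) (hα : α = ((-(Abig / Bbig) : ℝ) : ℂ)) :
    deriv O 1 = 0 :=
  stmt17_general n k A B α r hr P hP hcoef O hO Abig Bbig hAbig hBbig hBne hα
end
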